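/- arXiv:1809.02803 — 2 statements merged into one kernel-verified Lean document; each statement's English description precedes it below -/
import Mathlib

section
/- There exists a universal constant C > 0 such that for all Schwartz vector fields w = (w¹,w²) and v = (v¹,v²) on ℝ² with div w = 0 and div v = 0, |∫_{ℝ²} (w·∇v) · w dx| ≤ C ( ‖∂₁v‖_{L²}^{1/2} + ‖∂₂v‖_{L²}^{1/2} ) ‖∂₁∂₂v‖_{L²}^{1/2} ‖w‖_{L²}^{3/2} ‖∂₁w‖_{L²}^{1/2}. -/
/-!
Split `(w·∇v)·w = Σⱼ (w¹ ∂₁vʲ wʲ + w² ∂₂vʲ wʲ)` into products `f g h` of scalar Schwartz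
functions and bound each by the anisotropic estimate
`∫ |f g h| ≤ 2 (‖f‖ ‖∂₂f‖)^{1/2} (‖g‖ ‖∂₁g‖)^{1/2} ‖h‖`.
It follows from `f(x)² ≤ 2 ∫ |f ∂₂f|(x₁, t) dt` and `g(x)² ≤ 2 ∫ |g ∂₁g|(t, x₂) dt`
(fundamental theorem of calculus on lines), Cauchy–Schwarz and Fubini.
For `∂₁vʲ w¹ wʲ` take `f = ∂₁vʲ`, so `∂₂f = ∂₁∂₂vʲ`, and `g = w¹`; for `w² ∂₂vʲ wʲ` take
`f = w²`, whose `∂₂`-derivative is `-∂₁w¹` because `div w = 0`, and `g = ∂₂vʲ`.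
-/

open MeasureTheory Real

/-- The partial derivative `∂₁` on `ℝ²`. -/
noncomputable def pd1 {E : Type*} [NormedAddCommGroup E] [NormedSpace ℝ E]
    (g : ℝ × ℝ → E) (x : ℝ × ℝ) : E := fderiv ℝ g x (1, 0)

/-- The partial derivative `∂₂` on `ℝ²`. -/
noncomputable def pd2 {E : Type*} [NormedAddCommGroup E] [NormedSpace ℝ E]
    (g : ℝ × ℝ → E) (x : ℝ × ℝ) : E := fderiv ℝ g x (0, 1)

/-- The Euclidean dot product on `ℝ²`. -/
def pdot (a b : ℝ × ℝ) : ℝ := a.1 * b.1 + a.2 * b.2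

/-- The `L²(ℝ²)` norm of a vector field. -/
noncomputable def L2v (g : ℝ × ℝ → ℝ × ℝ) : ℝ :=
  Real.sqrt (∫ x : ℝ × ℝ, pdot (g x) (g x))

/-- The `L²(ℝ²)` norm of a scalar function. -/
noncomputable def L2s (f : ℝ × ℝ → ℝ) : ℝ :=
  Real.sqrt (∫ x : ℝ × ℝ, (f x) ^ 2)

/-- The convection term `u·∇v = u¹∂₁v + u²∂₂v` for vector fields on `ℝ²`. -/
noncomputable def convV (u v : ℝ × ℝ → ℝ × ℝ) (x : ℝ × ℝ) : ℝ × ℝ :=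
  (u x).1 • pd1 v x + (u x).2 • pd2 v x

/-- Pointwise divergence-free: `∂₁u¹ + ∂₂u² = 0`. -/
def DivFree (u : ℝ × ℝ → ℝ × ℝ) : Prop :=
  ∀ x, pd1 (fun y => (u y).1) x + pd2 (fun y => (u y).2) x = 0

open Filter Topology SchwartzMap LineDeriv

local notation "e₁" => ((1 : ℝ), (0 : ℝ))
local notation "e₂" => ((0 : ℝ), (1 : ℝ))

theorem sq_le_two_mul_integral_abs_mul_deriv {φ φ' : ℝ → ℝ} (hφ : ∀ t, HasDerivAt φ (φ' t) t)
    (hint : Integrable fun t => φ t * φ' t) (hlim : Tendsto φ atBot (𝓝 0)) (a : ℝ) :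
    φ a ^ 2 ≤ 2 * ∫ t, |φ t * φ' t| := by
  have hsq : ∀ t, HasDerivAt (fun t => φ t ^ 2) (2 * (φ t * φ' t)) t := fun t => by
    simpa [mul_assoc] using (hφ t).fun_pow 2
  have hint₂ : Integrable fun t => 2 * (φ t * φ' t) := hint.const_mul 2
  calc φ a ^ 2 = ∫ t in Set.Iic a, 2 * (φ t * φ' t) := by
        rw [integral_Iic_of_hasDerivAt_of_tendsto' (fun t _ => hsq t) hint₂.integrableOn
          (by simpa using hlim.pow 2), sub_zero]
    _ ≤ ∫ t in Set.Iic a, |2 * (φ t * φ' t)| :=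
        integral_mono hint₂.integrableOn hint₂.abs.integrableOn fun t => le_abs_self _
    _ ≤ ∫ t, |2 * (φ t * φ' t)| :=
        setIntegral_le_integral hint₂.abs (Eventually.of_forall fun t => abs_nonneg _)
    _ = 2 * ∫ t, |φ t * φ' t| := by simp only [abs_mul, abs_two, integral_const_mul]

theorem integral_abs_mul_le_sqrt_mul_sqrt {α : Type*} [MeasurableSpace α] {μ : Measure α}
    {f g : α → ℝ} (hf : MemLp f 2 μ) (hg : MemLp g 2 μ) :
    ∫ x, |f x * g x| ∂μ ≤ √(∫ x, f x ^ 2 ∂μ) * √(∫ x, g x ^ 2 ∂μ) := by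
  have h := integral_mul_norm_le_Lp_mul_Lq Real.HolderConjugate.two_two
    (by simpa using hf) (by simpa using hg)
  simp only [Real.norm_eq_abs, ← abs_mul, Real.rpow_two, sq_abs] at h
  simpa only [Real.sqrt_eq_rpow, one_div] using h

theorem integral_abs_mul_mul_le_of_sq_le {α β : Type*} [MeasurableSpace α] [MeasurableSpace β]
    {μ : Measure α} {ν : Measure β} [SFinite μ] [SFinite ν] {f g h : α × β → ℝ}
    {F : α → ℝ} {G : β → ℝ} (hF : Integrable F μ) (hG : Integrable G ν) (hF₀ : 0 ≤ F)
    (hG₀ : 0 ≤ G) (hfF : ∀ z, f z ^ 2 ≤ F z.1) (hgG : ∀ z, g z ^ 2 ≤ G z.2)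
    (hh : MemLp h 2 (μ.prod ν)) :
    ∫ z, |f z * g z * h z| ∂μ.prod ν ≤
      √(∫ a, F a ∂μ) * √(∫ b, G b ∂ν) * √(∫ z, h z ^ 2 ∂μ.prod ν) := by
  set K : α × β → ℝ := fun z => √(F z.1) * √(G z.2)
  have hK_sq : ∀ z, K z ^ 2 = F z.1 * G z.2 := fun z => by
    simp only [K, mul_pow, Real.sq_sqrt (hF₀ _), Real.sq_sqrt (hG₀ _)]
  have hK_meas : AEStronglyMeasurable K (μ.prod ν) :=
    (Real.continuous_sqrt.comp_aestronglyMeasurable hF.1.comp_fst).mul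
      (Real.continuous_sqrt.comp_aestronglyMeasurable hG.1.comp_snd)
  have hK : MemLp K 2 (μ.prod ν) :=
    (memLp_two_iff_integrable_sq hK_meas).2 (by simpa only [hK_sq] using hF.mul_prod hG)
  calc ∫ z, |f z * g z * h z| ∂μ.prod ν ≤ ∫ z, |K z * h z| ∂μ.prod ν := by
        refine integral_mono_of_nonneg (ae_of_all _ fun _ => abs_nonneg _)
          (hK.integrable_mul hh).abs (ae_of_all _ fun z => ?_)
        simp only [abs_mul, K, abs_of_nonneg (Real.sqrt_nonneg _)]
        gcongr ?_ * ?_ * _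
        · exact Real.abs_le_sqrt (hfF z)
        · exact Real.abs_le_sqrt (hgG z)
    _ ≤ √(∫ z, K z ^ 2 ∂μ.prod ν) * √(∫ z, h z ^ 2 ∂μ.prod ν) :=
        integral_abs_mul_le_sqrt_mul_sqrt hK hh
    _ = _ := by
        rw [integral_congr_ae (ae_of_all _ hK_sq), integral_prod_mul,
          Real.sqrt_mul (integral_nonneg hF₀)]

section PartialDerivatives

variable {E F : Type*} [NormedAddCommGroup E] [NormedSpace ℝ E] [NormedAddCommGroup F]
  [NormedSpace ℝ F]

theorem pd1_clm_comp (L : E →L[ℝ] F) {u : ℝ × ℝ → E} (hu : Differentiable ℝ u) :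
    pd1 (fun x => L (u x)) = fun x => L (pd1 u x) :=
  funext fun x => congrArg (· (1, 0)) (L.hasFDerivAt.comp x (hu x).hasFDerivAt).fderiv

theorem pd2_clm_comp (L : E →L[ℝ] F) {u : ℝ × ℝ → E} (hu : Differentiable ℝ u) :
    pd2 (fun x => L (u x)) = fun x => L (pd2 u x) :=
  funext fun x => congrArg (· (0, 1)) (L.hasFDerivAt.comp x (hu x).hasFDerivAt).fderiv

theorem pd2_pd1_comm {u : ℝ × ℝ → E} (hu : ContDiff ℝ 2 u) : pd2 (pd1 u) = pd1 (pd2 u) := by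
  have hdiff : Differentiable ℝ (fderiv ℝ u) :=
    (hu.fderiv_right (m := 1) le_rfl).differentiable one_ne_zero
  have hsecond : ∀ x a b, fderiv ℝ (fun y => fderiv ℝ u y b) x a = fderiv ℝ (fderiv ℝ u) x a b :=
    fun x a b => by simp [fderiv_clm_apply (hdiff x) (differentiableAt_const b)]
  funext x
  change fderiv ℝ (fun y => fderiv ℝ u y (1, 0)) x (0, 1)
    = fderiv ℝ (fun y => fderiv ℝ u y (0, 1)) x (1, 0)
  rw [hsecond, hsecond]
  exact hu.contDiffAt.isSymmSndFDerivAt (by simp [minSmoothness_of_isRCLikeNormedField]) _ _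

end PartialDerivatives

namespace SchwartzMap

section Products

variable {D : Type*} [NormedAddCommGroup D] [NormedSpace ℝ D] [MeasurableSpace D] [BorelSpace D]
  [SecondCountableTopology D] {μ : Measure D} [μ.HasTemperateGrowth]

theorem integrable_mul (f g : 𝓢(D, ℝ)) : Integrable (fun x => f x * g x) μ :=
  (pairing (ContinuousLinearMap.mul ℝ ℝ) f g).integrable

theorem integrable_mul_mul (f g h : 𝓢(D, ℝ)) : Integrable (fun x => f x * g x * h x) μ :=
  (pairing (ContinuousLinearMap.mul ℝ ℝ) (pairing (ContinuousLinearMap.mul ℝ ℝ) f g) h).integrable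

end Products

theorem sq_le_two_mul_integral_abs_mul (φ φ' : 𝓢(ℝ, ℝ)) (hφ : ∀ t, HasDerivAt φ (φ' t) t)
    (a : ℝ) : φ a ^ 2 ≤ 2 * ∫ t, |φ t * φ' t| :=
  sq_le_two_mul_integral_abs_mul_deriv hφ (integrable_mul φ φ')
    (φ.tendsto_cocompact.mono_left atBot_le_cocompact) a

section Slices

variable {D E F : Type*} [NormedAddCommGroup D] [NormedSpace ℝ D] [NormedAddCommGroup E]
  [NormedSpace ℝ E] [NormedAddCommGroup F] [NormedSpace ℝ F]

theorem _root_.Function.hasTemperateGrowth_prodMk_left (a : D) :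
    (fun t : E => (a, t)).HasTemperateGrowth := by
  convert (Function.HasTemperateGrowth.const (a, (0 : E))).add
    (ContinuousLinearMap.inr ℝ D E).hasTemperateGrowth using 1
  ext <;> simp

theorem _root_.Function.hasTemperateGrowth_prodMk_right (b : E) :
    (fun t : D => (t, b)).HasTemperateGrowth := by
  convert (Function.HasTemperateGrowth.const ((0 : D), b)).add
    (ContinuousLinearMap.inl ℝ D E).hasTemperateGrowth using 1
  ext <;> simp

noncomputable def sliceSnd (a : D) : 𝓢(D × E, F) →L[ℝ] 𝓢(E, F) :=
  compCLM ℝ (Function.hasTemperateGrowth_prodMk_left a)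
    ⟨1, 1, fun t => by simpa using (norm_snd_le (a, t)).trans (le_add_of_nonneg_left zero_le_one)⟩

noncomputable def sliceFst (b : E) : 𝓢(D × E, F) →L[ℝ] 𝓢(D, F) :=
  compCLM ℝ (Function.hasTemperateGrowth_prodMk_right b)
    ⟨1, 1, fun t => by simpa using (norm_fst_le (t, b)).trans (le_add_of_nonneg_left zero_le_one)⟩

end Slices

variable {F : Type*} [NormedAddCommGroup F] [NormedSpace ℝ F]

theorem hasDerivAt_sliceSnd (f : 𝓢(ℝ × ℝ, F)) (a t : ℝ) :
    HasDerivAt (sliceSnd a f) (pd2 f (a, t)) t :=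
  f.differentiableAt.hasFDerivAt.comp_hasDerivAt t
    ((hasDerivAt_const t a).prodMk (hasDerivAt_id t))

theorem hasDerivAt_sliceFst (f : 𝓢(ℝ × ℝ, F)) (b t : ℝ) :
    HasDerivAt (sliceFst b f) (pd1 f (t, b)) t :=
  f.differentiableAt.hasFDerivAt.comp_hasDerivAt t
    ((hasDerivAt_id t).prodMk (hasDerivAt_const t b))

theorem sq_le_two_mul_integral_abs_mul_pd2 (f : 𝓢(ℝ × ℝ, ℝ)) (x : ℝ × ℝ) :
    f x ^ 2 ≤ 2 * ∫ t, |f (x.1, t) * pd2 f (x.1, t)| :=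
  sq_le_two_mul_integral_abs_mul _ (sliceSnd x.1 (∂_{e₂} f)) (hasDerivAt_sliceSnd f x.1) x.2

theorem sq_le_two_mul_integral_abs_mul_pd1 (f : 𝓢(ℝ × ℝ, ℝ)) (x : ℝ × ℝ) :
    f x ^ 2 ≤ 2 * ∫ t, |f (t, x.2) * pd1 f (t, x.2)| :=
  sq_le_two_mul_integral_abs_mul _ (sliceFst x.2 (∂_{e₁} f)) (hasDerivAt_sliceFst f x.2) x.1

theorem integral_abs_mul_mul_le (f g h : 𝓢(ℝ × ℝ, ℝ)) :
    ∫ x, |f x * g x * h x| ≤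
      2 * √(L2s f * L2s (pd2 f)) * √(L2s g * L2s (pd1 g)) * L2s h := by
  set P : ℝ × ℝ → ℝ := fun x => |f x * pd2 f x|
  set Q : ℝ × ℝ → ℝ := fun x => |g x * pd1 g x|
  have hP : Integrable P (volume.prod volume) := (integrable_mul f (∂_{e₂} f)).abs
  have hQ : Integrable Q (volume.prod volume) := (integrable_mul g (∂_{e₁} g)).abs
  have hPQ := integral_abs_mul_mul_le_of_sq_le (h := h)
    (hP.integral_prod_left.const_mul 2) (hQ.integral_prod_right.const_mul 2)
    (fun a => mul_nonneg zero_le_two (integral_nonneg fun _ => abs_nonneg _))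
    (fun b => mul_nonneg zero_le_two (integral_nonneg fun _ => abs_nonneg _))
    (sq_le_two_mul_integral_abs_mul_pd2 f) (sq_le_two_mul_integral_abs_mul_pd1 g) (h.memLp 2)
  rw [integral_const_mul, integral_const_mul, ← integral_prod _ hP, ← integral_prod_symm _ hQ]
    at hPQ
  have hPle : ∫ x, P x ≤ L2s f * L2s (pd2 f) :=
    integral_abs_mul_le_sqrt_mul_sqrt (f.memLp 2) ((∂_{e₂} f).memLp 2 volume)
  have hQle : ∫ x, Q x ≤ L2s g * L2s (pd1 g) :=
    integral_abs_mul_le_sqrt_mul_sqrt (g.memLp 2) ((∂_{e₁} g).memLp 2 volume)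
  calc ∫ x, |f x * g x * h x| ≤ √(2 * ∫ x, P x) * √(2 * ∫ x, Q x) * L2s h := hPQ
    _ ≤ √(2 * (L2s f * L2s (pd2 f))) * √(2 * (L2s g * L2s (pd1 g))) * L2s h := by
        gcongr; exact Real.sqrt_nonneg _
    _ = 2 * √(L2s f * L2s (pd2 f)) * √(L2s g * L2s (pd1 g)) * L2s h := by
        rw [Real.sqrt_mul zero_le_two, Real.sqrt_mul zero_le_two]
        linear_combination √(L2s f * L2s (pd2 f)) * √(L2s g * L2s (pd1 g)) * L2s h *
          Real.mul_self_sqrt zero_le_two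

end SchwartzMap

theorem L2s_le_L2v {f : ℝ × ℝ → ℝ} (u : 𝓢(ℝ × ℝ, ℝ × ℝ))
    (h : ∀ x, f x ^ 2 ≤ pdot (u x) (u x)) : L2s f ≤ L2v u :=
  Real.sqrt_le_sqrt <| integral_mono_of_nonneg (ae_of_all _ fun _ => sq_nonneg _)
    ((integrable_mul (u.postcompCLM (.fst ℝ ℝ ℝ)) (u.postcompCLM (.fst ℝ ℝ ℝ))).add
      (integrable_mul (u.postcompCLM (.snd ℝ ℝ ℝ)) (u.postcompCLM (.snd ℝ ℝ ℝ))))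
    (ae_of_all _ h)

theorem sq_fst_le_pdot (p : ℝ × ℝ) : p.1 ^ 2 ≤ pdot p p := by
  simp only [pdot, sq]; linarith [mul_self_nonneg p.2]

theorem sq_snd_le_pdot (p : ℝ × ℝ) : p.2 ^ 2 ≤ pdot p p := by
  simp only [pdot, sq]; linarith [mul_self_nonneg p.1]

theorem pd1_fst {u : ℝ × ℝ → ℝ × ℝ} (hu : Differentiable ℝ u) :
    pd1 (fun x => (u x).1) = fun x => (pd1 u x).1 :=
  pd1_clm_comp (.fst ℝ ℝ ℝ) hu

theorem DivFree.pd2_snd {u : ℝ × ℝ → ℝ × ℝ} (hdiv : DivFree u) (hu : Differentiable ℝ u) :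
    pd2 (fun x => (u x).2) = fun x => -(pd1 u x).1 := by
  funext x
  have := hdiv x
  rw [pd1_fst hu] at this
  linarith

section Trilinear

variable (L : ℝ × ℝ →L[ℝ] ℝ) (w v : 𝓢(ℝ × ℝ, ℝ × ℝ))

theorem integrable_abs_pd1_mul : Integrable fun x => |L (pd1 v x) * (w x).1 * L (w x)| :=
  (integrable_mul_mul ((∂_{e₁} v).postcompCLM L) (w.postcompCLM (.fst ℝ ℝ ℝ))
    (w.postcompCLM L)).abs

theorem integrable_abs_mul_pd2 : Integrable fun x => |(w x).2 * L (pd2 v x) * L (w x)| :=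
  (integrable_mul_mul (w.postcompCLM (.snd ℝ ℝ ℝ)) ((∂_{e₂} v).postcompCLM L)
    (w.postcompCLM L)).abs

theorem integral_abs_pd1_mul_le (hL : ∀ p, L p ^ 2 ≤ pdot p p) :
    ∫ x, |L (pd1 v x) * (w x).1 * L (w x)| ≤
      2 * √(L2v (pd1 v) * L2v (pd1 (pd2 v))) * √(L2v w * L2v (pd1 w)) * L2v w := by
  have hmixed : pd2 (fun x => L (pd1 v x)) = fun x => L (pd1 (pd2 v) x) := by
    rw [pd2_clm_comp L (∂_{e₁} v).differentiable, pd2_pd1_comm (v.smooth 2)]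
  have h₁ : L2s (fun x => L (pd1 v x)) ≤ L2v (pd1 v) := L2s_le_L2v (∂_{e₁} v) fun _ => hL _
  have h₂ : L2s (fun x => L (pd1 (pd2 v) x)) ≤ L2v (pd1 (pd2 v)) :=
    L2s_le_L2v (∂_{e₁} (∂_{e₂} v)) fun _ => hL _
  have h₃ : L2s (fun x => (w x).1) ≤ L2v w := L2s_le_L2v w fun _ => sq_fst_le_pdot _
  have h₄ : L2s (fun x => (pd1 w x).1) ≤ L2v (pd1 w) :=
    L2s_le_L2v (∂_{e₁} w) fun _ => sq_fst_le_pdot _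
  have h₅ : L2s (fun x => L (w x)) ≤ L2v w := L2s_le_L2v w fun _ => hL _
  calc ∫ x, |L (pd1 v x) * (w x).1 * L (w x)|
      ≤ 2 * √(L2s (fun x => L (pd1 v x)) * L2s (pd2 fun x => L (pd1 v x)))
          * √(L2s (fun x => (w x).1) * L2s (pd1 fun x => (w x).1)) * L2s (fun x => L (w x)) :=
        integral_abs_mul_mul_le ((∂_{e₁} v).postcompCLM L) (w.postcompCLM (.fst ℝ ℝ ℝ))
          (w.postcompCLM L)
    _ ≤ _ := by
        rw [hmixed, pd1_fst w.differentiable]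
        gcongr <;> exact Real.sqrt_nonneg _

theorem integral_abs_mul_pd2_le (hL : ∀ p, L p ^ 2 ≤ pdot p p) (hw : DivFree w) :
    ∫ x, |(w x).2 * L (pd2 v x) * L (w x)| ≤
      2 * √(L2v w * L2v (pd1 w)) * √(L2v (pd2 v) * L2v (pd1 (pd2 v))) * L2v w := by
  have h₁ : L2s (fun x => (w x).2) ≤ L2v w := L2s_le_L2v w fun _ => sq_snd_le_pdot _
  have h₂ : L2s (fun x => -(pd1 w x).1) ≤ L2v (pd1 w) :=
    L2s_le_L2v (∂_{e₁} w) fun _ => (neg_sq _).trans_le (sq_fst_le_pdot _)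
  have h₃ : L2s (fun x => L (pd2 v x)) ≤ L2v (pd2 v) := L2s_le_L2v (∂_{e₂} v) fun _ => hL _
  have h₄ : L2s (fun x => L (pd1 (pd2 v) x)) ≤ L2v (pd1 (pd2 v)) :=
    L2s_le_L2v (∂_{e₁} (∂_{e₂} v)) fun _ => hL _
  have h₅ : L2s (fun x => L (w x)) ≤ L2v w := L2s_le_L2v w fun _ => hL _
  calc ∫ x, |(w x).2 * L (pd2 v x) * L (w x)|
      ≤ 2 * √(L2s (fun x => (w x).2) * L2s (pd2 fun x => (w x).2))
          * √(L2s (fun x => L (pd2 v x)) * L2s (pd1 fun x => L (pd2 v x)))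
          * L2s (fun x => L (w x)) :=
        integral_abs_mul_mul_le (w.postcompCLM (.snd ℝ ℝ ℝ)) ((∂_{e₂} v).postcompCLM L)
          (w.postcompCLM L)
    _ ≤ _ := by
        rw [hw.pd2_snd w.differentiable, pd1_clm_comp L (∂_{e₂} v).differentiable]
        gcongr <;> exact Real.sqrt_nonneg _

end Trilinear

theorem pdot_convV_self (w v : ℝ × ℝ → ℝ × ℝ) (x : ℝ × ℝ) :
    pdot (convV w v x) (w x) =
      ((pd1 v x).1 * (w x).1 * (w x).1 + (w x).2 * (pd2 v x).1 * (w x).1) +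
        ((pd1 v x).2 * (w x).1 * (w x).2 + (w x).2 * (pd2 v x).2 * (w x).2) := by
  simp only [pdot, convV, Prod.fst_add, Prod.snd_add, Prod.smul_fst, Prod.smul_snd, smul_eq_mul]
  ring

theorem abs_integral_pdot_convV_le (w v : 𝓢(ℝ × ℝ, ℝ × ℝ)) :
    |∫ x, pdot (convV w v x) (w x)| ≤
      ((∫ x, |(pd1 v x).1 * (w x).1 * (w x).1|) + ∫ x, |(w x).2 * (pd2 v x).1 * (w x).1|) +
        ((∫ x, |(pd1 v x).2 * (w x).1 * (w x).2|) + ∫ x, |(w x).2 * (pd2 v x).2 * (w x).2|) := by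
  have i₁ : Integrable fun x => |(pd1 v x).1 * (w x).1 * (w x).1| :=
    integrable_abs_pd1_mul (.fst ℝ ℝ ℝ) w v
  have i₂ : Integrable fun x => |(w x).2 * (pd2 v x).1 * (w x).1| :=
    integrable_abs_mul_pd2 (.fst ℝ ℝ ℝ) w v
  have i₃ : Integrable fun x => |(pd1 v x).2 * (w x).1 * (w x).2| :=
    integrable_abs_pd1_mul (.snd ℝ ℝ ℝ) w v
  have i₄ : Integrable fun x => |(w x).2 * (pd2 v x).2 * (w x).2| :=
    integrable_abs_mul_pd2 (.snd ℝ ℝ ℝ) w v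
  calc |∫ x, pdot (convV w v x) (w x)| ≤ ∫ x, |pdot (convV w v x) (w x)| :=
        abs_integral_le_integral_abs
    _ ≤ ∫ x, ((|(pd1 v x).1 * (w x).1 * (w x).1| + |(w x).2 * (pd2 v x).1 * (w x).1|) +
          (|(pd1 v x).2 * (w x).1 * (w x).2| + |(w x).2 * (pd2 v x).2 * (w x).2|)) := by
        refine integral_mono_of_nonneg (ae_of_all _ fun _ => abs_nonneg _)
          ((i₁.fun_add i₂).fun_add (i₃.fun_add i₄)) (ae_of_all _ fun x => ?_)
        dsimp only
        rw [pdot_convV_self]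
        exact (abs_add_le _ _).trans (add_le_add (abs_add_le _ _) (abs_add_le _ _))
    _ = _ := by
        rw [integral_add (i₁.fun_add i₂) (i₃.fun_add i₄), integral_add i₁ i₂, integral_add i₃ i₄]

/-- Trilinear estimate used in the uniqueness proof: there is a universal `C > 0`
such that for Schwartz divergence-free `w, v` on `ℝ²`,
`|∫ (w·∇v)·w dx| ≤ C (‖∂₁v‖^{1/2} + ‖∂₂v‖^{1/2}) ‖∂₁∂₂v‖^{1/2} ‖w‖^{3/2} ‖∂₁w‖^{1/2}`. -/
theorem stmt10 :
    ∃ C > (0:ℝ), ∀ w v : SchwartzMap (ℝ × ℝ) (ℝ × ℝ), DivFree ⇑w → DivFree ⇑v →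
      |∫ x : ℝ × ℝ, pdot (convV ⇑w ⇑v x) (w x)|
        ≤ C * (L2v (pd1 ⇑v) ^ ((1:ℝ)/2) + L2v (pd2 ⇑v) ^ ((1:ℝ)/2))
            * L2v (pd1 (pd2 ⇑v)) ^ ((1:ℝ)/2)
            * L2v ⇑w ^ ((3:ℝ)/2) * L2v (pd1 ⇑w) ^ ((1:ℝ)/2) := by
  refine ⟨4, by norm_num, fun w v hw _ => ?_⟩
  have h₁ := integral_abs_pd1_mul_le (.fst ℝ ℝ ℝ) w v sq_fst_le_pdot
  have h₂ := integral_abs_mul_pd2_le (.fst ℝ ℝ ℝ) w v sq_fst_le_pdot hw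
  have h₃ := integral_abs_pd1_mul_le (.snd ℝ ℝ ℝ) w v sq_snd_le_pdot
  have h₄ := integral_abs_mul_pd2_le (.snd ℝ ℝ ℝ) w v sq_snd_le_pdot hw
  simp only [ContinuousLinearMap.coe_fst', ContinuousLinearMap.coe_snd'] at h₁ h₂ h₃ h₄
  have hA₁ : 0 ≤ L2v (pd1 v) := Real.sqrt_nonneg _
  have hA₂ : 0 ≤ L2v (pd2 v) := Real.sqrt_nonneg _
  have hW : 0 ≤ L2v w := Real.sqrt_nonneg _
  calc _ ≤ _ := abs_integral_pdot_convV_le w v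
    _ ≤ 4 * ((√(L2v (pd1 v) * L2v (pd1 (pd2 v))) + √(L2v (pd2 v) * L2v (pd1 (pd2 v))))
          * √(L2v w * L2v (pd1 w)) * L2v w) := by linarith
    _ = _ := by
        rw [Real.sqrt_mul hA₁, Real.sqrt_mul hA₂, Real.sqrt_mul hW,
          show (3 : ℝ) / 2 = 1 / 2 + 1 by norm_num, Real.rpow_add' hW (by norm_num), Real.rpow_one]
        simp only [Real.sqrt_eq_rpow]
        ring
end

section
/- There exists a constant C > 0 such that for every smooth function u : 𝕋² → ℝ² one has ‖u‖_{L⁴(𝕋²)}⁴ ≤ C ‖u‖_{H^{0,1}}² ‖u‖_{H^{1,1}}². Consequently, any u : [0,T] → C^∞(𝕋²;ℝ²) that is bounded in L^∞([0,T];H^{0,1}) and in L²([0,T];H^{1,1}) is bounded in L⁴([0,T];L⁴(𝕋²)), with ∫₀ᵀ‖u(t)‖_{L⁴}⁴ dt ≤ C (sup_{t∈[0,T]} ‖u(t)‖_{H^{0,1}}²) ∫₀ᵀ ‖u(t)‖_{H^{1,1}}² dt. -/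
open MeasureTheory Real

/-- The fundamental cell of the torus `𝕋² = (ℝ/2πℤ)²`. -/
noncomputable def Q2 : Set (ℝ × ℝ) :=
  (Set.Ioc (0:ℝ) (2 * Real.pi)) ×ˢ (Set.Ioc (0:ℝ) (2 * Real.pi))

/-- A function on `ℝ²` is `2π`-periodic in each variable (i.e. it is a function on `𝕋²`). -/
def PeriodicT {E : Type*} (g : ℝ × ℝ → E) : Prop :=
  ∀ x : ℝ × ℝ, g (x.1 + 2 * Real.pi, x.2) = g x ∧ g (x.1, x.2 + 2 * Real.pi) = g x

/-- The `L²(𝕋²)` inner product of two vector fields. -/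
noncomputable def innerT (g h : ℝ × ℝ → ℝ × ℝ) : ℝ := ∫ x in Q2, pdot (g x) (h x)

/-- The `L²(𝕋²)` norm of a vector field. -/
noncomputable def L2T (g : ℝ × ℝ → ℝ × ℝ) : ℝ := Real.sqrt (∫ x in Q2, pdot (g x) (g x))

/-- The squared anisotropic norm `‖g‖_{H^{0,1}}²` on `𝕋²`. -/
noncomputable def H01sqT (g : ℝ × ℝ → ℝ × ℝ) : ℝ := L2T g ^ 2 + L2T (pd2 g) ^ 2

/-- The squared anisotropic norm `‖g‖_{H^{1,1}}²` on `𝕋²`. -/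
noncomputable def H11sqT (g : ℝ × ℝ → ℝ × ℝ) : ℝ :=
  L2T g ^ 2 + L2T (pd1 g) ^ 2 + L2T (pd2 g) ^ 2 + L2T (pd1 (pd2 g)) ^ 2


/-!
Write `F = |u|²`. The functions `F`, `∂₁F`, `∂₂F` and `∂₁∂₂F` are pointwise bounded by the
`H^{1,1}` density `|u|² + |∂₁u|² + |∂₂u|² + |∂₁∂₂u|²`. Applying the one-dimensional bound
`|g x| ≤ ⨍|g| + ∫|g'|` first in `x₂` and then in `x₁` gives
`|F| ≤ ∫|F| + ∫|∂₁F| + ∫|∂₂F| + ∫|∂₁∂₂F|` on the cell (whose side `2π ≥ 1` makes the averaging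
factors harmless), hence `sup |u|² ≤ 4 ‖u‖_{H^{1,1}}²` and
`‖u‖_{L⁴}⁴ ≤ sup |u|² · ‖u‖_{L²}² ≤ 4 ‖u‖_{H^{0,1}}² ‖u‖_{H^{1,1}}²`.
-/

open Set MeasureTheory

section Pdot

lemma pdot_comm (a b : ℝ × ℝ) : pdot a b = pdot b a := by
  unfold pdot
  ring

lemma pdot_self_nonneg (a : ℝ × ℝ) : 0 ≤ pdot a a :=
  add_nonneg (mul_self_nonneg _) (mul_self_nonneg _)

lemma abs_two_mul_pdot_le (a b : ℝ × ℝ) : |2 * pdot a b| ≤ pdot a a + pdot b b := by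
  unfold pdot
  rw [abs_le]
  constructor <;> nlinarith [sq_nonneg (a.1 - b.1), sq_nonneg (a.1 + b.1),
    sq_nonneg (a.2 - b.2), sq_nonneg (a.2 + b.2)]

lemma continuous_pdot_self {g : ℝ × ℝ → ℝ × ℝ} (hg : Continuous g) :
    Continuous fun z => pdot (g z) (g z) := by
  unfold pdot
  fun_prop

lemma contDiff_pdot {n : WithTop ℕ∞} {v w : ℝ × ℝ → ℝ × ℝ} (hv : ContDiff ℝ n v)
    (hw : ContDiff ℝ n w) : ContDiff ℝ n fun x => pdot (v x) (w x) := by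
  unfold pdot
  fun_prop

lemma fderiv_pdot_apply {v w : ℝ × ℝ → ℝ × ℝ} {x : ℝ × ℝ} (hv : DifferentiableAt ℝ v x)
    (hw : DifferentiableAt ℝ w x) (e : ℝ × ℝ) :
    fderiv ℝ (fun y => pdot (v y) (w y)) x e
      = pdot (fderiv ℝ v x e) (w x) + pdot (v x) (fderiv ℝ w x e) := by
  have h : HasFDerivAt (fun y => pdot (v y) (w y)) _ x :=
    (hv.hasFDerivAt.fst.mul hw.hasFDerivAt.fst).add (hv.hasFDerivAt.snd.mul hw.hasFDerivAt.snd)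
  rw [h.fderiv]
  simp only [add_apply, smul_apply, ContinuousLinearMap.comp_apply, ContinuousLinearMap.coe_fst',
    ContinuousLinearMap.coe_snd', smul_eq_mul, pdot]
  ring

end Pdot

section PartialDerivatives

variable {E : Type*} [NormedAddCommGroup E] [NormedSpace ℝ E]

lemma contDiff_pd1 {m n : WithTop ℕ∞} {F : ℝ × ℝ → E} (hF : ContDiff ℝ n F)
    (hmn : m + 1 ≤ n) : ContDiff ℝ m (pd1 F) :=
  (hF.fderiv_right hmn).clm_apply contDiff_const

lemma contDiff_pd2 {m n : WithTop ℕ∞} {F : ℝ × ℝ → E} (hF : ContDiff ℝ n F)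
    (hmn : m + 1 ≤ n) : ContDiff ℝ m (pd2 F) :=
  (hF.fderiv_right hmn).clm_apply contDiff_const

lemma hasDerivAt_pd1 {F : ℝ × ℝ → E} {x : ℝ × ℝ} (hF : DifferentiableAt ℝ F x) :
    HasDerivAt (fun s => F (s, x.2)) (pd1 F x) x.1 := by
  simpa [pd1, Function.comp_def] using
    hF.hasFDerivAt.comp_hasDerivAt x.1 ((hasDerivAt_id x.1).prodMk (hasDerivAt_const x.1 x.2))

lemma hasDerivAt_pd2 {F : ℝ × ℝ → E} {x : ℝ × ℝ} (hF : DifferentiableAt ℝ F x) :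
    HasDerivAt (fun t => F (x.1, t)) (pd2 F x) x.2 := by
  simpa [pd2, Function.comp_def] using
    hF.hasFDerivAt.comp_hasDerivAt x.2 ((hasDerivAt_const x.2 x.1).prodMk (hasDerivAt_id x.2))

end PartialDerivatives

theorem abs_le_average_abs_add_integral_abs_deriv {g g' : ℝ → ℝ} {a b x : ℝ} (hab : a < b)
    (hg : ∀ t ∈ Icc a b, HasDerivAt g (g' t) t) (hg' : IntegrableOn g' (Icc a b))
    (hx : x ∈ Icc a b) :
    |g x| ≤ (b - a)⁻¹ * (∫ t in Ioc a b, |g t|) + ∫ t in Ioc a b, |g' t| := by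
  have hgc : ContinuousOn g (Icc a b) := fun t ht => (hg t ht).continuousAt.continuousWithinAt
  obtain ⟨y, hy, hy_le⟩ := exists_le_setAverage (f := fun t => |g t|) (μ := volume)
    (by simp [hab]) measure_Ioc_lt_top.ne
    (hgc.abs.integrableOn_Icc.mono_set Ioc_subset_Icc_self)
  rw [setAverage_eq, Real.volume_real_Ioc_of_le hab.le, smul_eq_mul] at hy_le
  have hyx : uIcc y x ⊆ Icc a b := uIcc_subset_Icc (Ioc_subset_Icc_self hy) hx
  have hftc : ∫ t in y..x, g' t = g x - g y :=
    intervalIntegral.integral_eq_sub_of_hasDerivAt (fun t ht => hg t (hyx ht))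
      (hg'.mono_set hyx).intervalIntegrable
  have hvar : |∫ t in y..x, g' t| ≤ ∫ t in Ioc a b, |g' t| := by
    refine intervalIntegral.norm_integral_le_integral_norm_uIoc.trans
      (setIntegral_mono_set (hg'.mono_set Ioc_subset_Icc_self).norm
        (.of_forall fun _ => norm_nonneg _) (.of_forall ?_))
    rw [← uIoc_of_le hab.le]
    exact uIoc_subset_uIoc_of_uIcc_subset_uIcc (by rwa [uIcc_of_le hab.le])
  rw [hftc] at hvar
  linarith [abs_sub_abs_le_abs_sub (g x) (g y)]

section Fubini

variable {α β E : Type*} [MeasurableSpace α] [MeasurableSpace β] {μ : Measure α} {ν : Measure β}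
  [SFinite μ] [SFinite ν] [NormedAddCommGroup E] [NormedSpace ℝ E]

theorem setIntegral_prod_symm (f : α × β → E) {s : Set α} {t : Set β}
    (hf : IntegrableOn f (s ×ˢ t) (μ.prod ν)) :
    ∫ z in s ×ˢ t, f z ∂μ.prod ν = ∫ y in t, ∫ x in s, f (x, y) ∂μ ∂ν := by
  simp only [← Measure.prod_restrict s t, IntegrableOn] at hf ⊢
  exact integral_prod_symm f hf

theorem IntegrableOn.setIntegral_prod_right {f : α × β → E} {s : Set α} {t : Set β}
    (hf : IntegrableOn f (s ×ˢ t) (μ.prod ν)) :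
    IntegrableOn (fun y => ∫ x in s, f (x, y) ∂μ) t ν := by
  rw [IntegrableOn, ← Measure.prod_restrict] at hf
  exact hf.integral_prod_right

end Fubini

theorem Continuous.integrableOn_Ioc_prod_Ioc {E : Type*} [NormedAddCommGroup E]
    {f : ℝ × ℝ → E} (hf : Continuous f) (a b c d : ℝ) :
    IntegrableOn f (Ioc a b ×ˢ Ioc c d) :=
  (hf.continuousOn.integrableOn_compact (isCompact_Icc.prod isCompact_Icc)).mono_set
    (prod_mono Ioc_subset_Icc_self Ioc_subset_Icc_self)

section Rectangle

variable {a b c d : ℝ}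

theorem setIntegral_abs_slice_le {H : ℝ × ℝ → ℝ} (hH : ContDiff ℝ 1 H) (hab : a < b) {x : ℝ}
    (hx : x ∈ Icc a b) :
    ∫ t in Ioc c d, |H (x, t)|
      ≤ (b - a)⁻¹ * (∫ z in Ioc a b ×ˢ Ioc c d, |H z|) + ∫ z in Ioc a b ×ˢ Ioc c d, |pd1 H z| := by
  have hHc : Continuous fun z => |H z| := hH.continuous.abs
  have h1c : Continuous (pd1 H) := (contDiff_pd1 (m := 0) hH (by simp)).continuous
  have hHi := hHc.integrableOn_Ioc_prod_Ioc a b c d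
  have h1i := h1c.abs.integrableOn_Ioc_prod_Ioc a b c d
  have hHm := (IntegrableOn.setIntegral_prod_right hHi).const_mul (b - a)⁻¹
  have h1m := IntegrableOn.setIntegral_prod_right h1i
  rw [Measure.volume_eq_prod, setIntegral_prod_symm _ hHi, setIntegral_prod_symm _ h1i,
    ← integral_const_mul, ← integral_add hHm h1m]
  refine setIntegral_mono_on (hHc.comp (continuous_const.prodMk continuous_id)).integrableOn_Ioc
    (hHm.add h1m) measurableSet_Ioc fun t _ => ?_
  exact abs_le_average_abs_add_integral_abs_deriv (g := fun s => H (s, t))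
    (g' := fun s => pd1 H (s, t)) hab
    (fun s _ => hasDerivAt_pd1 (x := (s, t)) (hH.differentiable one_ne_zero _))
    (h1c.comp (continuous_id.prodMk continuous_const)).integrableOn_Icc hx

theorem abs_le_integral_abs_pd_rect {F : ℝ × ℝ → ℝ} (hF : ContDiff ℝ 2 F) (hab : a < b)
    (hcd : c < d) {p : ℝ × ℝ} (hp : p ∈ Icc a b ×ˢ Icc c d) :
    |F p| ≤ (d - c)⁻¹ * ((b - a)⁻¹ * (∫ z in Ioc a b ×ˢ Ioc c d, |F z|)
        + ∫ z in Ioc a b ×ˢ Ioc c d, |pd1 F z|)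
      + ((b - a)⁻¹ * (∫ z in Ioc a b ×ˢ Ioc c d, |pd2 F z|)
        + ∫ z in Ioc a b ×ˢ Ioc c d, |pd1 (pd2 F) z|) := by
  have hF1 : ContDiff ℝ 1 F := hF.of_le (by norm_num)
  have hF2 : ContDiff ℝ 1 (pd2 F) := contDiff_pd2 hF (by norm_num)
  calc |F p|
      ≤ (d - c)⁻¹ * (∫ t in Ioc c d, |F (p.1, t)|) + ∫ t in Ioc c d, |pd2 F (p.1, t)| :=
        abs_le_average_abs_add_integral_abs_deriv (g := fun t => F (p.1, t))
          (g' := fun t => pd2 F (p.1, t)) hcd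
          (fun t _ => hasDerivAt_pd2 (x := (p.1, t)) (hF1.differentiable one_ne_zero _))
          (hF2.continuous.comp (continuous_const.prodMk continuous_id)).integrableOn_Icc hp.2
    _ ≤ _ := by
        gcongr
        · exact setIntegral_abs_slice_le hF1 hab hp.1
        · exact setIntegral_abs_slice_le hF2 hab hp.1

end Rectangle

lemma measurableSet_Q2 : MeasurableSet Q2 :=
  measurableSet_Ioc.prod measurableSet_Ioc

lemma L2T_sq (g : ℝ × ℝ → ℝ × ℝ) : L2T g ^ 2 = ∫ x in Q2, pdot (g x) (g x) :=
  Real.sq_sqrt (integral_nonneg fun _ => pdot_self_nonneg _)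

lemma H11sqT_nonneg (g : ℝ × ℝ → ℝ × ℝ) : 0 ≤ H11sqT g := by
  unfold H11sqT
  positivity

section Ladyzhenskaya

variable {u : ℝ × ℝ → ℝ × ℝ}

noncomputable def h11Density (u : ℝ × ℝ → ℝ × ℝ) (z : ℝ × ℝ) : ℝ :=
  pdot (u z) (u z) + pdot (pd1 u z) (pd1 u z) + pdot (pd2 u z) (pd2 u z)
    + pdot (pd1 (pd2 u) z) (pd1 (pd2 u) z)

lemma continuous_pd_of_contDiff_two (hu : ContDiff ℝ 2 u) :
    Continuous u ∧ Continuous (pd1 u) ∧ Continuous (pd2 u) ∧ Continuous (pd1 (pd2 u)) :=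
  ⟨hu.continuous, (contDiff_pd1 (m := 1) hu (by norm_num)).continuous,
    (contDiff_pd2 (m := 1) hu (by norm_num)).continuous,
    (contDiff_pd1 (m := 0) (contDiff_pd2 (m := 1) hu (by norm_num)) (by norm_num)).continuous⟩

lemma continuous_h11Density (hu : ContDiff ℝ 2 u) : Continuous (h11Density u) := by
  obtain ⟨c0, c1, c2, c3⟩ := continuous_pd_of_contDiff_two hu
  exact (((continuous_pdot_self c0).add (continuous_pdot_self c1)).add
    (continuous_pdot_self c2)).add (continuous_pdot_self c3)

lemma integral_h11Density (hu : ContDiff ℝ 2 u) : ∫ z in Q2, h11Density u z = H11sqT u := by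
  obtain ⟨c0, c1, c2, c3⟩ := continuous_pd_of_contDiff_two hu
  have hi : ∀ {g : ℝ × ℝ → ℝ × ℝ}, Continuous g → IntegrableOn (fun z => pdot (g z) (g z)) Q2 :=
    fun hg => (continuous_pdot_self hg).integrableOn_Ioc_prod_Ioc _ _ _ _
  have i01 : IntegrableOn (fun z => pdot (u z) (u z) + pdot (pd1 u z) (pd1 u z)) Q2 :=
    (hi c0).add (hi c1)
  have i012 : IntegrableOn (fun z => pdot (u z) (u z) + pdot (pd1 u z) (pd1 u z)
      + pdot (pd2 u z) (pd2 u z)) Q2 := i01.add (hi c2)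
  unfold h11Density H11sqT
  rw [integral_add i012 (hi c3), integral_add i01 (hi c2), integral_add (hi c0) (hi c1),
    L2T_sq, L2T_sq, L2T_sq, L2T_sq]

lemma abs_fderiv_pdot_self_le {z : ℝ × ℝ} (hu : DifferentiableAt ℝ u z) (e : ℝ × ℝ) :
    |fderiv ℝ (fun x => pdot (u x) (u x)) z e|
      ≤ pdot (u z) (u z) + pdot (fderiv ℝ u z e) (fderiv ℝ u z e) := by
  rw [fderiv_pdot_apply hu hu, pdot_comm (fderiv ℝ u z e), ← two_mul]
  exact abs_two_mul_pdot_le _ _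

lemma pd2_pdot_self (hu : Differentiable ℝ u) :
    pd2 (fun x => pdot (u x) (u x)) = fun z => 2 * pdot (u z) (pd2 u z) := by
  funext z
  rw [pd2, fderiv_pdot_apply (hu z) (hu z), pdot_comm, ← two_mul]
  rfl

lemma abs_pdot_self_le_h11Density (z : ℝ × ℝ) : |pdot (u z) (u z)| ≤ h11Density u z := by
  rw [abs_of_nonneg (pdot_self_nonneg _)]
  unfold h11Density
  linarith [pdot_self_nonneg (pd1 u z), pdot_self_nonneg (pd2 u z),
    pdot_self_nonneg (pd1 (pd2 u) z)]

lemma abs_pd1_pdot_self_le_h11Density {z : ℝ × ℝ} (hu : DifferentiableAt ℝ u z) :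
    |pd1 (fun x => pdot (u x) (u x)) z| ≤ h11Density u z := by
  have h : |pd1 (fun x => pdot (u x) (u x)) z| ≤ pdot (u z) (u z) + pdot (pd1 u z) (pd1 u z) :=
    abs_fderiv_pdot_self_le hu (1, 0)
  unfold h11Density
  linarith [pdot_self_nonneg (pd2 u z), pdot_self_nonneg (pd1 (pd2 u) z)]

lemma abs_pd2_pdot_self_le_h11Density {z : ℝ × ℝ} (hu : DifferentiableAt ℝ u z) :
    |pd2 (fun x => pdot (u x) (u x)) z| ≤ h11Density u z := by
  have h : |pd2 (fun x => pdot (u x) (u x)) z| ≤ pdot (u z) (u z) + pdot (pd2 u z) (pd2 u z) :=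
    abs_fderiv_pdot_self_le hu (0, 1)
  unfold h11Density
  linarith [pdot_self_nonneg (pd1 u z), pdot_self_nonneg (pd1 (pd2 u) z)]

lemma abs_pd1_pd2_pdot_self_le_h11Density (hu : ContDiff ℝ 2 u) (z : ℝ × ℝ) :
    |pd1 (pd2 fun x => pdot (u x) (u x)) z| ≤ h11Density u z := by
  have hud : Differentiable ℝ u := hu.differentiable two_ne_zero
  have hu2 : ContDiff ℝ 1 (pd2 u) := contDiff_pd2 hu (by norm_num)
  have hmixed : pd1 (pd2 fun x => pdot (u x) (u x)) z
      = 2 * pdot (pd1 u z) (pd2 u z) + 2 * pdot (u z) (pd1 (pd2 u) z) := by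
    have hdiff : Differentiable ℝ fun x => pdot (u x) (pd2 u x) :=
      (contDiff_pdot (hu.of_le (by norm_num)) hu2).differentiable one_ne_zero
    rw [pd2_pdot_self hud, pd1, fderiv_const_mul (hdiff z), smul_apply,
      smul_eq_mul, fderiv_pdot_apply (hud z) (hu2.differentiable one_ne_zero z), mul_add]
    rfl
  rw [hmixed, h11Density]
  have h1 := abs_two_mul_pdot_le (pd1 u z) (pd2 u z)
  have h2 := abs_two_mul_pdot_le (u z) (pd1 (pd2 u) z)
  linarith [abs_add_le (2 * pdot (pd1 u z) (pd2 u z)) (2 * pdot (u z) (pd1 (pd2 u) z))]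

lemma setIntegral_abs_le_H11sqT (hu : ContDiff ℝ 2 u) {f : ℝ × ℝ → ℝ} (hf : Continuous f)
    (hfu : ∀ z, |f z| ≤ h11Density u z) : ∫ z in Q2, |f z| ≤ H11sqT u :=
  (setIntegral_mono_on (hf.abs.integrableOn_Ioc_prod_Ioc _ _ _ _)
    ((continuous_h11Density hu).integrableOn_Ioc_prod_Ioc _ _ _ _) measurableSet_Q2
    fun z _ => hfu z).trans_eq (integral_h11Density hu)

lemma pdot_self_le_four_mul_H11sqT (hu : ContDiff ℝ 2 u) {p : ℝ × ℝ} (hp : p ∈ Q2) :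
    pdot (u p) (u p) ≤ 4 * H11sqT u := by
  have hF : ContDiff ℝ 2 fun x => pdot (u x) (u x) := contDiff_pdot hu hu
  have hud : Differentiable ℝ u := hu.differentiable two_ne_zero
  have h0 := setIntegral_abs_le_H11sqT hu hF.continuous abs_pdot_self_le_h11Density
  have h1 := setIntegral_abs_le_H11sqT hu (contDiff_pd1 (m := 1) hF (by norm_num)).continuous
    fun z => abs_pd1_pdot_self_le_h11Density (hud z)
  have h2 := setIntegral_abs_le_H11sqT hu (contDiff_pd2 (m := 1) hF (by norm_num)).continuous
    fun z => abs_pd2_pdot_self_le_h11Density (hud z)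
  have h12 := setIntegral_abs_le_H11sqT hu
    (contDiff_pd1 (m := 0) (contDiff_pd2 (m := 1) hF (by norm_num)) (by norm_num)).continuous
    (abs_pd1_pd2_pdot_self_le_h11Density hu)
  have hagmon := abs_le_integral_abs_pd_rect hF two_pi_pos two_pi_pos
    (prod_mono Ioc_subset_Icc_self Ioc_subset_Icc_self hp)
  rw [sub_zero, show Ioc 0 (2 * π) ×ˢ Ioc 0 (2 * π) = Q2 from rfl] at hagmon
  have hk : (2 * π)⁻¹ ≤ 1 := inv_le_one_of_one_le₀ (by linarith [pi_gt_three])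
  calc pdot (u p) (u p) ≤ |pdot (u p) (u p)| := le_abs_self _
    _ ≤ _ := hagmon
    _ ≤ 1 * (1 * H11sqT u + H11sqT u) + (1 * H11sqT u + H11sqT u) := by gcongr
    _ = 4 * H11sqT u := by ring

theorem integral_pdot_self_sq_le (hu : ContDiff ℝ 2 u) :
    ∫ x in Q2, (pdot (u x) (u x)) ^ 2 ≤ 4 * H01sqT u * H11sqT u := by
  have hF : Continuous fun x => pdot (u x) (u x) := continuous_pdot_self hu.continuous
  calc ∫ x in Q2, (pdot (u x) (u x)) ^ 2
      ≤ ∫ x in Q2, 4 * H11sqT u * pdot (u x) (u x) :=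
        setIntegral_mono_on ((hF.pow 2).integrableOn_Ioc_prod_Ioc _ _ _ _)
          ((hF.integrableOn_Ioc_prod_Ioc _ _ _ _).const_mul _) measurableSet_Q2 fun x hx => by
            rw [sq]
            exact mul_le_mul_of_nonneg_right (pdot_self_le_four_mul_H11sqT hu hx)
              (pdot_self_nonneg _)
    _ = 4 * H11sqT u * L2T u ^ 2 := by rw [integral_const_mul, L2T_sq]
    _ ≤ 4 * H11sqT u * H01sqT u := by
        gcongr
        · exact mul_nonneg zero_le_four (H11sqT_nonneg u)
        · exact le_add_of_nonneg_right (sq_nonneg _)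
    _ = 4 * H01sqT u * H11sqT u := by ring

end Ladyzhenskaya

theorem integral_integral_pdot_self_sq_le {T : ℝ} {u : ℝ → ℝ × ℝ → ℝ × ℝ}
    (hu : ∀ t, ContDiff ℝ 2 (u t)) (hbdd : BddAbove ((fun t => H01sqT (u t)) '' Icc 0 T))
    (hint : IntegrableOn (fun t => H11sqT (u t)) (Ioc 0 T)) :
    ∫ t in Ioc 0 T, ∫ x in Q2, (pdot (u t x) (u t x)) ^ 2
      ≤ 4 * sSup ((fun t => H01sqT (u t)) '' Icc 0 T) * ∫ t in Ioc 0 T, H11sqT (u t) := by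
  rw [← integral_const_mul]
  refine integral_mono_of_nonneg (.of_forall fun t => integral_nonneg fun x => sq_nonneg _)
    (hint.const_mul _) ?_
  filter_upwards [ae_restrict_mem measurableSet_Ioc] with t ht
  calc ∫ x in Q2, (pdot (u t x) (u t x)) ^ 2 ≤ 4 * H01sqT (u t) * H11sqT (u t) :=
        integral_pdot_self_sq_le (hu t)
    _ ≤ _ := by
        gcongr
        · exact H11sqT_nonneg _
        · exact le_csSup hbdd (mem_image_of_mem _ (Ioc_subset_Icc_self ht))

/-- Anisotropic Ladyzhenskaya-type inequality on the torus,
`‖u‖_{L⁴}⁴ ≤ C ‖u‖_{H^{0,1}}² ‖u‖_{H^{1,1}}²`, together with its consequence: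
boundedness in `L^∞([0,T];H^{0,1}) ∩ L²([0,T];H^{1,1})` implies boundedness in
`L⁴([0,T];L⁴)`. Note `‖u(x)‖⁴ = (pdot (u x) (u x))²`. -/
theorem stmt14 :
    ∃ C > (0:ℝ),
      (∀ u : ℝ × ℝ → ℝ × ℝ, ContDiff ℝ (⊤ : ℕ∞) u → PeriodicT u →
        ∫ x in Q2, (pdot (u x) (u x)) ^ 2 ≤ C * H01sqT u * H11sqT u)
      ∧ (∀ T ≥ (0:ℝ), ∀ u : ℝ → ℝ × ℝ → ℝ × ℝ,
          (∀ t : ℝ, ContDiff ℝ (⊤ : ℕ∞) (u t) ∧ PeriodicT (u t)) →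
          (∃ M : ℝ, ∀ t ∈ Set.Icc (0:ℝ) T, H01sqT (u t) ≤ M) →
          IntegrableOn (fun t => H11sqT (u t)) (Set.Ioc (0:ℝ) T) →
          ∫ t in Set.Ioc (0:ℝ) T, ∫ x in Q2, (pdot (u t x) (u t x)) ^ 2
            ≤ C * sSup ((fun t => H01sqT (u t)) '' Set.Icc (0:ℝ) T)
                * ∫ t in Set.Ioc (0:ℝ) T, H11sqT (u t)) := by
  have hC2 : ∀ {v : ℝ × ℝ → ℝ × ℝ}, ContDiff ℝ (⊤ : ℕ∞) v → ContDiff ℝ 2 v :=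
    fun hv => hv.of_le (by norm_cast)
  refine ⟨4, by norm_num, fun u hu _ => integral_pdot_self_sq_le (hC2 hu), ?_⟩
  rintro T - u hu ⟨M, hM⟩ hint
  exact integral_integral_pdot_self_sq_le (fun t => hC2 (hu t).1) ⟨M, forall_mem_image.2 hM⟩ hint
end
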